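/- arXiv:2204.12295 — 2 statements merged into one kernel-verified Lean document; each statement's English description precedes it below -/
import Mathlib

section
/- Closure under pointwise convergence: Let d ≥ 1, λ ∈ (0,1), and fix gauge functions η_1,…,η_{2d}. For each k ∈ ℕ let F_k : ℝ^{2d} → ℝ be a weak averaging operator with ellipticity constant λ and gauge functions η_1,…,η_{2d}, and let u_k : ℤ^d → ℝ be nonnegative, F_k-harmonic, with u_k(0,…,0) = 1. If u_k(x) → u(x) as k → ∞ for every x ∈ ℤ^d, then u is nonnegative, u(0,…,0) = 1, and u is F-harmonic for some weak averaging operator F with ellipticity constant λ and gauge functions η_1,…,η_{2d}. -/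
/-!
A weak averaging operator is monotone and commutes with adding constants, hence is 1-Lipschitz
for the sup norm and satisfies `|F t| ≤ ‖t‖`. By Tychonoff, the operators `F_k` therefore
converge pointwise along an ultrafilter finer than `atTop` to some `F`. Every axiom of a weak
averaging operator is a closed condition, so `F` inherits them, and the `F_k` being
equi-Lipschitz lets `u_k(x) = F_k(u_k(x + e_1), …)` pass to the limit.
-/

/-- The `2d` lattice directions on `ℤ^d`: for `j < d` this is the standard basis
vector `e_j`, and for `d ≤ j < 2d` it is `-e_{j-d}`. -/
def nbr (d : ℕ) (j : Fin (2 * d)) : Fin d → ℤ :=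
  fun i => if (j : ℕ) = (i : ℕ) then 1 else if (j : ℕ) = (i : ℕ) + d then -1 else 0

/-- `u : ℤ^d → ℝ` is `F`-harmonic if `u x = F (u (x+e_1), …, u (x+e_{2d}))` for all `x`. -/
def IsFHarmonic (d : ℕ) (F : (Fin (2 * d) → ℝ) → ℝ) (u : (Fin d → ℤ) → ℝ) : Prop :=
  ∀ x : Fin d → ℤ, u x = F fun j => u fun i => x i + nbr d j i

/-- A weak (isotropic) averaging operator with ellipticity constant `lam` and
gauge functions `η`. -/
structure IsWeakAvgOp (d : ℕ) (lam : ℝ) (η : Fin (2 * d) → ℝ → ℝ)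
    (F : (Fin (2 * d) → ℝ) → ℝ) : Prop where
  map_zero : F (fun _ => 0) = 0
  map_one : F (fun _ => 1) = 1
  continuous : Continuous F
  mono : ∀ (t : Fin (2 * d) → ℝ) (i : Fin (2 * d)) (s : ℝ),
    t i ≤ s → F t ≤ F (Function.update t i s)
  add_const : ∀ (t : Fin (2 * d) → ℝ) (c : ℝ), F (fun i => t i + c) = c + F t
  homog : ∀ (t : Fin (2 * d) → ℝ) (c : ℝ), F (fun i => c * t i) = c * F t
  perm : ∀ (t : Fin (2 * d) → ℝ) (σ : Equiv.Perm (Fin (2 * d))), F (t ∘ σ) = F t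
  ellip : ∀ k : Fin (2 * d), lam ≤ F fun i => if i = k then 1 else 0
  gauge_cont : ∀ i, ContinuousOn (η i) (Set.Ici 0)
  gauge_mono : ∀ i, MonotoneOn (η i) (Set.Ici 0)
  gauge_zero : ∀ i, η i 0 = 0
  gauge_nonneg : ∀ i s, 0 ≤ s → 0 ≤ η i s
  gauge_bound : ∀ (t : Fin (2 * d) → ℝ) (i : Fin (2 * d)) (s : ℝ),
    |F t - F (Function.update t i s)| ≤ η i |t i - s|

open Filter Topology

theorem monotone_of_le_update {ι α β : Type*} [Fintype ι] [DecidableEq ι] [Preorder α]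
    [Preorder β] {F : (ι → α) → β}
    (h : ∀ (t : ι → α) (i : ι) (s : α), t i ≤ s → F t ≤ F (Function.update t i s)) :
    Monotone F := by
  intro t t' htt'
  have key : ∀ s : Finset ι, F t ≤ F (s.piecewise t' t) := by
    intro s
    induction s using Finset.induction_on with
    | empty => rw [Finset.piecewise_empty]
    | insert a s ha ih =>
      rw [Finset.piecewise_insert]
      refine ih.trans (h _ a _ ?_)
      rw [Finset.piecewise_eq_of_notMem _ _ _ ha]
      exact htt' a
  simpa using key Finset.univ

theorem lipschitzWith_one_of_monotone_of_add_const {ι : Type*} [Fintype ι]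
    {F : (ι → ℝ) → ℝ} (hmono : Monotone F)
    (hadd : ∀ (t : ι → ℝ) (c : ℝ), F (fun i => t i + c) = c + F t) :
    LipschitzWith 1 F := by
  refine LipschitzWith.of_le_add fun t s => ?_
  have hle : t ≤ fun i => s i + dist t s := fun i => by
    linarith [le_abs_self (t i - s i), Real.dist_eq (t i) (s i), dist_le_pi_dist t s i]
  linarith [hmono hle, hadd s (dist t s)]

theorem Filter.Tendsto.apply_of_lipschitzWith {ι α β : Type*} [PseudoMetricSpace α]
    [PseudoMetricSpace β] {f : ι → α → β} {K : NNReal} {l : Filter ι} {x : ι → α} {y : α}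
    {b : β} (hf : ∀ k, LipschitzWith K (f k)) (hfy : Tendsto (fun k => f k y) l (𝓝 b))
    (hx : Tendsto x l (𝓝 y)) : Tendsto (fun k => f k (x k)) l (𝓝 b) := by
  refine hfy.congr_dist (squeeze_zero (fun _ => dist_nonneg)
    (fun k => (dist_comm _ _).trans_le ((hf k).dist_le_mul (x k) y)) ?_)
  simpa using (tendsto_iff_dist_tendsto_zero.1 hx).const_mul (K : ℝ)

namespace IsWeakAvgOp

variable {d : ℕ} {lam : ℝ} {η : Fin (2 * d) → ℝ → ℝ} {F : (Fin (2 * d) → ℝ) → ℝ}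

protected theorem monotone (hF : IsWeakAvgOp d lam η F) : Monotone F :=
  monotone_of_le_update hF.mono

theorem lipschitzWith_one (hF : IsWeakAvgOp d lam η F) : LipschitzWith 1 F :=
  lipschitzWith_one_of_monotone_of_add_const hF.monotone hF.add_const

theorem abs_le_norm (hF : IsWeakAvgOp d lam η F) (t : Fin (2 * d) → ℝ) : |F t| ≤ ‖t‖ := by
  have h0 : F 0 = 0 := hF.map_zero
  simpa [h0, Real.dist_eq] using hF.lipschitzWith_one.dist_le_mul t 0

theorem exists_tendsto_ultrafilter {ι : Type*} {Fs : ι → (Fin (2 * d) → ℝ) → ℝ}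
    (hF : ∀ k, IsWeakAvgOp d lam η (Fs k)) (φ : Ultrafilter ι) :
    ∃ F, Tendsto Fs φ (𝓝 F) := by
  have hK : IsCompact (Set.univ.pi fun t : Fin (2 * d) → ℝ => Set.Icc (-‖t‖) ‖t‖) :=
    isCompact_univ_pi fun _ => isCompact_Icc
  obtain ⟨F, -, hFlim⟩ := hK.ultrafilter_le_nhds (φ.map Fs) <| le_principal_iff.2 <|
    Ultrafilter.mem_map.2 <| univ_mem' fun k t _ => abs_le.1 ((hF k).abs_le_norm t)
  exact ⟨F, hFlim⟩

theorem of_tendsto {ι : Type*} {l : Filter ι} [l.NeBot] {Fs : ι → (Fin (2 * d) → ℝ) → ℝ}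
    (hF : ∀ k, IsWeakAvgOp d lam η (Fs k)) (hlim : Tendsto Fs l (𝓝 F)) :
    IsWeakAvgOp d lam η F := by
  have ht : ∀ t, Tendsto (fun k => Fs k t) l (𝓝 (F t)) := tendsto_pi_nhds.1 hlim
  have hconst : ∀ {t : Fin (2 * d) → ℝ} {c : ℝ}, (∀ k, Fs k t = c) → F t = c := fun h =>
    tendsto_nhds_unique (ht _) (tendsto_const_nhds.congr fun k => (h k).symm)
  obtain ⟨k₀⟩ := l.nonempty_of_neBot
  refine
    { map_zero := hconst fun k => (hF k).map_zero
      map_one := hconst fun k => (hF k).map_one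
      continuous := ?_
      mono := fun t i s hts =>
        le_of_tendsto_of_tendsto' (ht t) (ht _) fun k => (hF k).mono t i s hts
      add_const := fun t c => tendsto_nhds_unique (ht _) <|
        ((ht t).const_add c).congr fun k => ((hF k).add_const t c).symm
      homog := fun t c => tendsto_nhds_unique (ht _) <|
        ((ht t).const_mul c).congr fun k => ((hF k).homog t c).symm
      perm := fun t σ => tendsto_nhds_unique (ht _) <|
        (ht t).congr fun k => ((hF k).perm t σ).symm
      ellip := fun j => ge_of_tendsto (ht _) (.of_forall fun k => (hF k).ellip j)
      gauge_cont := (hF k₀).gauge_cont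
      gauge_mono := (hF k₀).gauge_mono
      gauge_zero := (hF k₀).gauge_zero
      gauge_nonneg := (hF k₀).gauge_nonneg
      gauge_bound := fun t i s => le_of_tendsto ((ht t).sub (ht _)).abs
        (.of_forall fun k => (hF k).gauge_bound t i s) }
  exact ((isClosed_setOfPred_lipschitzWith 1).mem_of_tendsto hlim
    (.of_forall fun k => (hF k).lipschitzWith_one)).continuous

end IsWeakAvgOp

theorem IsFHarmonic.of_tendsto {d : ℕ} {ι : Type*} {l : Filter ι} [l.NeBot] {K : NNReal}
    {Fs : ι → (Fin (2 * d) → ℝ) → ℝ} {F : (Fin (2 * d) → ℝ) → ℝ} {us : ι → (Fin d → ℤ) → ℝ}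
    {u : (Fin d → ℤ) → ℝ} (hFs : ∀ k, LipschitzWith K (Fs k)) (hF : Tendsto Fs l (𝓝 F))
    (hharm : ∀ k, IsFHarmonic d (Fs k) (us k)) (hu : Tendsto us l (𝓝 u)) :
    IsFHarmonic d F u := fun x => by
  have hnbr : Tendsto (fun k j => us k fun i => x i + nbr d j i) l
      (𝓝 fun j => u fun i => x i + nbr d j i) :=
    tendsto_pi_nhds.2 fun j => tendsto_pi_nhds.1 hu _
  refine tendsto_nhds_unique (tendsto_pi_nhds.1 hu x) ?_
  simpa only [← hharm _ x] using (tendsto_pi_nhds.1 hF _).apply_of_lipschitzWith hFs hnbr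

theorem closed_under_pointwise_limits_general (d : ℕ) (lam : ℝ) (η : Fin (2 * d) → ℝ → ℝ)
    (Fseq : ℕ → (Fin (2 * d) → ℝ) → ℝ) (useq : ℕ → (Fin d → ℤ) → ℝ)
    (hFseq : ∀ k, IsWeakAvgOp d lam η (Fseq k))
    (hpos : ∀ k x, 0 ≤ useq k x) (hnorm : ∀ k, useq k (fun _ => 0) = 1)
    (hharm : ∀ k, IsFHarmonic d (Fseq k) (useq k))
    (u : (Fin d → ℤ) → ℝ)
    (hconv : ∀ x, Filter.Tendsto (fun k => useq k x) Filter.atTop (nhds (u x))) :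
    (∀ x, 0 ≤ u x) ∧ u (fun _ => 0) = 1 ∧
      ∃ F, IsWeakAvgOp d lam η F ∧ IsFHarmonic d F u := by
  refine ⟨fun x => ge_of_tendsto (hconv x) (.of_forall fun k => hpos k x),
    tendsto_nhds_unique (hconv _) (tendsto_const_nhds.congr fun k => (hnorm k).symm), ?_⟩
  let φ : Ultrafilter ℕ := .of atTop
  obtain ⟨F, hF⟩ := IsWeakAvgOp.exists_tendsto_ultrafilter hFseq φ
  exact ⟨F, IsWeakAvgOp.of_tendsto hFseq hF,
    IsFHarmonic.of_tendsto (fun k => (hFseq k).lipschitzWith_one) hF hharm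
      ((tendsto_pi_nhds.2 hconv).mono_left (Ultrafilter.of_le _))⟩

/-- Closure of the class `P_λ` under pointwise convergence. -/
theorem closed_under_pointwise_limits (d : ℕ) (hd : 0 < d) (lam : ℝ) (hlam0 : 0 < lam)
    (hlam1 : lam < 1) (η : Fin (2 * d) → ℝ → ℝ)
    (Fseq : ℕ → (Fin (2 * d) → ℝ) → ℝ) (useq : ℕ → (Fin d → ℤ) → ℝ)
    (hFseq : ∀ k, IsWeakAvgOp d lam η (Fseq k))
    (hpos : ∀ k x, 0 ≤ useq k x) (hnorm : ∀ k, useq k (fun _ => 0) = 1)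
    (hharm : ∀ k, IsFHarmonic d (Fseq k) (useq k))
    (u : (Fin d → ℤ) → ℝ)
    (hconv : ∀ x, Filter.Tendsto (fun k => useq k x) Filter.atTop (nhds (u x))) :
    (∀ x, 0 ≤ u x) ∧ u (fun _ => 0) = 1 ∧
      ∃ F, IsWeakAvgOp d lam η F ∧ IsFHarmonic d F u :=
  closed_under_pointwise_limits_general d lam η Fseq useq hFseq hpos hnorm hharm u hconv
end

section
/- Lipschitz property of the discrete p-laplacian averaging operator: Let d ≥ 1 and 1 < p < ∞. For all t, s, t_2,…,t_{2d} ∈ ℝ, |F_p(t, t_2,…,t_{2d}) − F_p(s, t_2,…,t_{2d})| ≤ |t − s|. -/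
/-- `signPow p s = sign(s) · |s|^(p-1)`, i.e. `s·|s|^(p-2)` for `s ≠ 0` and `0` for `s = 0`. -/
noncomputable def signPow (p s : ℝ) : ℝ := Real.sign s * |s| ^ (p - 1)

lemma signPow_nonneg_eq {p : ℝ} (hp : 1 < p) {s : ℝ} (hs : 0 ≤ s) :
    signPow p s = s ^ (p - 1) := by
  rcases eq_or_lt_of_le hs with h | h
  · simp [signPow, ← h, Real.zero_rpow (by linarith : p - (1:ℝ) ≠ 0)]
  · simp [signPow, Real.sign_of_pos h, abs_of_pos h]

lemma signPow_nonpos_eq {p : ℝ} (hp : 1 < p) {s : ℝ} (hs : s ≤ 0) :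
    signPow p s = -((-s) ^ (p - 1)) := by
  rcases eq_or_lt_of_le hs with h | h
  · simp [signPow, h, Real.zero_rpow (by linarith : p - (1:ℝ) ≠ 0)]
  · simp [signPow, Real.sign_of_neg h, abs_of_neg h]

lemma signPow_strictMono {p : ℝ} (hp : 1 < p) : StrictMono (signPow p) := by
  have hp1 : (0:ℝ) < p - 1 := by linarith
  intro x y hxy
  rcases le_or_gt 0 x with hx | hx
  · rw [signPow_nonneg_eq hp hx, signPow_nonneg_eq hp (le_trans hx hxy.le)]
    exact Real.rpow_lt_rpow hx hxy hp1
  · rcases le_or_gt y 0 with hy | hy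
    · rw [signPow_nonpos_eq hp hx.le, signPow_nonpos_eq hp hy]
      have := Real.rpow_lt_rpow (neg_nonneg.mpr hy) (by linarith : -y < -x) hp1
      linarith
    · have h1 : signPow p x < 0 := by
        rw [signPow_nonpos_eq hp hx.le]
        have := Real.rpow_pos_of_pos (by linarith : (0:ℝ) < -x) (p - 1)
        linarith
      have h2 : 0 < signPow p y := by
        rw [signPow_nonneg_eq hp hy.le]
        exact Real.rpow_pos_of_pos hy _
      linarith

lemma plaplacian_key (d : ℕ) (hd : 0 < d) (p : ℝ) (hp : 1 < p)
    (t s : ℝ) (w : Fin (2 * d) → ℝ) (a b : ℝ)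
    (ha : ∑ i : Fin (2 * d), signPow p (a - if (i : ℕ) = 0 then t else w i) = 0)
    (hb : ∑ i : Fin (2 * d), signPow p (b - if (i : ℕ) = 0 then s else w i) = 0) :
    a - b ≤ |t - s| := by
  by_contra h
  push_neg at h
  have hab : 0 < a - b := lt_of_le_of_lt (abs_nonneg _) h
  have hne : Nonempty (Fin (2 * d)) := ⟨⟨0, by omega⟩⟩
  have hlt : ∀ i ∈ (Finset.univ : Finset (Fin (2 * d))), signPow p (b - if (i : ℕ) = 0 then s else w i)
      < signPow p (a - if (i : ℕ) = 0 then t else w i) := by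
    intro i _
    apply signPow_strictMono hp
    by_cases hi : (i : ℕ) = 0
    · simp only [hi, if_pos]
      have hts : t - s ≤ |t - s| := le_abs_self _
      linarith
    · simp only [hi, if_neg, if_false]
      linarith
  have hsum := Finset.sum_lt_sum_of_nonempty Finset.univ_nonempty hlt
  rw [ha, hb] at hsum
  exact lt_irrefl 0 hsum

/-- Lipschitz property of the discrete `p`-laplacian averaging operator in the
first variable: `|F_p(t, t_2,…,t_{2d}) − F_p(s, t_2,…,t_{2d})| ≤ |t − s|`. -/
theorem plaplacian_lipschitz (d : ℕ) (hd : 0 < d) (p : ℝ) (hp : 1 < p)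
    (t s : ℝ) (w : Fin (2 * d) → ℝ) (a b : ℝ)
    (ha : ∑ i : Fin (2 * d), signPow p (a - if (i : ℕ) = 0 then t else w i) = 0)
    (hb : ∑ i : Fin (2 * d), signPow p (b - if (i : ℕ) = 0 then s else w i) = 0) :
    |a - b| ≤ |t - s| := by
  rw [abs_sub_le_iff]
  refine ⟨plaplacian_key d hd p hp t s w a b ha hb, ?_⟩
  have := plaplacian_key d hd p hp s t w b a hb ha
  rwa [abs_sub_comm] at this
end
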